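/- arXiv:1101.1034 — 2 statements merged into one kernel-verified Lean document; each statement's English description precedes it below -/
import Mathlib

section
/- If a nondegenerate real random variable X satisfies E[e^{-wX}] = 1 for some w > 0, then E[X] is well defined with E[X^-] < ∞ and E[X] ∈ (0, ∞], i.e., the negative part of X is integrable and the mean of X is strictly positive (possibly infinite). -/
open MeasureTheory ProbabilityTheory Real

lemma exp_neg_strictConvex (w : ℝ) (hw : 0 < w) :
    StrictConvexOn ℝ Set.univ (fun x : ℝ => Real.exp (-w * x)) := by
  constructor
  · exact convex_univ
  · intro x _ y _ hxy a b ha hb hab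
    have hne : -w * x ≠ -w * y := by
      intro h
      exact hxy (mul_left_cancel₀ (neg_ne_zero.mpr hw.ne') h)
    have := strictConvexOn_exp.2 (Set.mem_univ (-w * x)) (Set.mem_univ (-w * y)) hne ha hb hab
    have harg : -w * (a • x + b • y) = a • (-w * x) + b • (-w * y) := by
      simp only [smul_eq_mul]; ring
    show Real.exp (-w * (a • x + b • y)) < _
    rw [harg]
    exact this

/-- If a nondegenerate real random variable `X` satisfies `E[e^{-wX}] = 1` for some `w > 0`,
then `E[X]` is well defined with `E[X⁻] < ∞` and `E[X] ∈ (0, ∞]`: the negative part of `X`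
is integrable and the mean of `X` is strictly positive (possibly infinite, i.e. if `X` is
integrable then `∫ X > 0`). -/
theorem stmt_1 {Ω : Type*} [MeasurableSpace Ω] (μ : Measure Ω) [IsProbabilityMeasure μ]
    (X : Ω → ℝ) (hX : Measurable X) (w : ℝ) (hw : 0 < w)
    (hint : Integrable (fun ω => Real.exp (-w * X ω)) μ)
    (hcramer : ∫ ω, Real.exp (-w * X ω) ∂μ = 1)
    (hnondeg : ∀ r : ℝ, μ {ω | X ω = r} < 1) :
    Integrable (fun ω => max (-X ω) 0) μ ∧
      (Integrable X μ → 0 < ∫ ω, X ω ∂μ) := by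
  constructor
  · refine (hint.const_mul w⁻¹).mono ?_ ?_
    · exact (hX.neg.max measurable_const).aestronglyMeasurable
    · refine Filter.Eventually.of_forall fun ω => ?_
      have h1 : -w * X ω ≤ Real.exp (-w * X ω) := (Real.add_one_le_exp _).trans' (by linarith)
      have h2 : (0:ℝ) ≤ Real.exp (-w * X ω) := (Real.exp_pos _).le
      rw [Real.norm_eq_abs, Real.norm_eq_abs, abs_of_nonneg (le_max_right _ _),
        abs_of_nonneg (by positivity)]
      rcases le_total (X ω) 0 with h | h
      · rw [max_eq_left (by linarith)]
        rw [le_inv_mul_iff₀ hw]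
        nlinarith
      · rw [max_eq_right (by linarith)]
        positivity
  · intro hXint
    have havg : (⨍ ω, X ω ∂μ) = ∫ ω, X ω ∂μ := average_eq_integral ..
    have hgi : Integrable ((fun x : ℝ => Real.exp (-w * x)) ∘ X) μ := hint
    rcases (exp_neg_strictConvex w hw).ae_eq_const_or_map_average_lt
        (Continuous.continuousOn (by continuity)) isClosed_univ
        (Filter.Eventually.of_forall fun _ => Set.mem_univ _) hXint hgi with h | h
    · exfalso
      have : μ {ω | X ω = ⨍ ω, X ω ∂μ} = 1 := by
        rw [← measure_univ (μ := μ)]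
        apply measure_congr
        filter_upwards [h] with ω hω
        simp only [Set.mem_setOf_eq, Set.mem_univ, iff_true, eq_iff_iff]
        exact ⟨fun _ => trivial, fun _ => hω⟩
      exact absurd this (hnondeg _).ne
    · rw [havg] at h
      have h2 : ⨍ ω, Real.exp (-w * X ω) ∂μ = 1 :=
        (average_eq_integral ..).trans hcramer
      have h3 : Real.exp (-w * ∫ ω, X ω ∂μ) < 1 := h.trans_eq h2
      have := Real.exp_lt_one_iff.mp h3
      nlinarith
end

section
/- Let c: [0, A) → ℝ (0 < A ≤ ∞) be strictly convex and differentiable with c(0) = 0, c(w) = 0 for some w ∈ (0, A), and c'(w) = μ* > 0. Then the function R(x) := x · c*(1/x), where c*(v) = sup_{α}(αv - c(α)) is the Fenchel-Legendre transform, is strictly decreasing on the interval (x_0, 1/μ*), where x_0 := lim_{α→A⁻} 1/c'(α) < 1/μ*. -/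
set_option maxHeartbeats 1000000

open Set Filter Topology

/-- Strict tangent line inequality for strictly convex functions. -/
lemma tangent_lt_aux {S : Set ℝ} {c : ℝ → ℝ} (hconv : StrictConvexOn ℝ S c) {a b d : ℝ}
    (hd : HasDerivAt c d a) (ha : a ∈ S) (hb : b ∈ S) (hne : b ≠ a) :
    c a + d * (b - a) < c b := by
  rcases lt_or_gt_of_ne hne with h | h
  · have hs := hconv.slope_lt_of_hasDerivAt hb ha h hd
    rw [slope_def_field, div_lt_iff₀ (by linarith)] at hs
    nlinarith
  · have hs := hconv.lt_slope_of_hasDerivAt ha hb h hd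
    rw [slope_def_field, lt_div_iff₀ (by linarith)] at hs
    nlinarith

/-- Weak tangent line inequality. -/
lemma tangent_le_aux {S : Set ℝ} {c : ℝ → ℝ} (hconv : StrictConvexOn ℝ S c) {a b d : ℝ}
    (hd : HasDerivAt c d a) (ha : a ∈ S) (hb : b ∈ S) :
    c a + d * (b - a) ≤ c b := by
  rcases eq_or_ne b a with rfl | hne
  · simp
  · exact (tangent_lt_aux hconv hd ha hb hne).le

/-- Let `c : [0, A) → ℝ` (`0 < A ≤ ∞`) be strictly convex and differentiable with
`c(0) = 0`, `c(w) = 0` for some `w ∈ (0, A)`, and `c'(w) = μ* > 0`. Then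
`R(x) := x c*(1/x)`, where `c*(v) = sup_{α ∈ [0,A)} (αv - c(α))` is the Fenchel-Legendre
transform, is strictly decreasing on `(x_0, 1/μ*)`, where
`x_0 := lim_{α → A⁻} 1/c'(α) < 1/μ*` (the limit equals the infimum since `1/c'` is
antitone, which is how it is encoded). `A ≤ ∞` is handled by taking `A : EReal` and
working on the set `{α : ℝ | 0 ≤ α ∧ α < A}`. -/
theorem stmt_18 (A : EReal) (hA : 0 < A) (c c' : ℝ → ℝ) (w μstar x0 : ℝ)
    (hconv : StrictConvexOn ℝ {α : ℝ | 0 ≤ α ∧ (α : EReal) < A} c)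
    (hderiv : ∀ α : ℝ, 0 < α → (α : EReal) < A → HasDerivAt c (c' α) α)
    (hcont : ContinuousOn c {α : ℝ | 0 ≤ α ∧ (α : EReal) < A})
    (h0 : c 0 = 0) (hw : 0 < w) (hwA : (w : EReal) < A) (hcw : c w = 0)
    (hμ : c' w = μstar) (hμpos : 0 < μstar)
    (hx0 : IsGLB ((fun α => 1 / c' α) '' {α : ℝ | w < α ∧ (α : EReal) < A}) x0)
    (hx0lt : x0 < 1 / μstar) :
    StrictAntiOn
      (fun x => x * sSup {y : ℝ | ∃ α : ℝ, 0 ≤ α ∧ (α : EReal) < A ∧ y = α * (1 / x) - c α})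
      (Set.Ioo x0 (1 / μstar)) := by
  set D : Set ℝ := {α : ℝ | 0 ≤ α ∧ (α : EReal) < A} with hD
  have hwD : w ∈ D := ⟨hw.le, hwA⟩
  have h0D : (0 : ℝ) ∈ D := ⟨le_refl 0, by exact_mod_cast hA⟩
  -- tangent inequalities specialized
  have tanlt : ∀ a ∈ D, 0 < a → ∀ b ∈ D, b ≠ a → c a + c' a * (b - a) < c b := by
    intro a haD ha b hb hne
    exact tangent_lt_aux hconv (hderiv a ha haD.2) haD hb hne
  have tanle : ∀ a ∈ D, 0 < a → ∀ b ∈ D, c a + c' a * (b - a) ≤ c b := by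
    intro a haD ha b hb
    exact tangent_le_aux hconv (hderiv a ha haD.2) haD hb
  -- derivative is strictly larger than μstar past w
  have hderiv_gt : ∀ α, w < α → (α : EReal) < A → μstar < c' α := by
    intro α hwα hαA
    have hαD : α ∈ D := ⟨(hw.trans hwα).le, hαA⟩
    have h1 := tanlt w hwD hw α hαD (by intro h; exact absurd h (ne_of_gt hwα))
    have h2 := tanlt α hαD (hw.trans hwα) w hwD (by intro h; exact absurd h (ne_of_lt hwα))
    rw [hμ] at h1
    nlinarith
  -- positivity of c past w
  have hcpos : ∀ α, w < α → (α : EReal) < A → 0 < c α := by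
    intro α hwα hαA
    have hαD : α ∈ D := ⟨(hw.trans hwα).le, hαA⟩
    have hα : 0 < α := hw.trans hwα
    have hcomb := hconv.2 h0D hαD (fun h => by simp [← h] at hα)
      (show (0:ℝ) < 1 - w / α by
        have : w / α < 1 := (div_lt_one hα).mpr hwα; linarith)
      (show (0:ℝ) < w / α from div_pos hw hα)
      (show (1 - w / α) + (w / α) = 1 by ring)
    have hα' : α ≠ 0 := ne_of_gt hα
    rw [show (1 - w / α) • (0:ℝ) + (w / α) • α = w by
      rw [smul_eq_mul, smul_eq_mul]; field_simp; ring, hcw] at hcomb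
    simp only [smul_eq_mul, h0, mul_zero, zero_add] at hcomb
    nlinarith [div_pos hw hα]
  -- x0 is nonnegative
  have hx0nn : 0 ≤ x0 := by
    apply hx0.2
    rintro z ⟨α, ⟨hwα, hαA⟩, rfl⟩
    have h1 := hderiv_gt α hwα hαA
    have h2 : 0 < c' α := hμpos.trans h1
    positivity
  -- the domain past w is nonempty : get β with w < β < A
  obtain ⟨β, hwβ, hβA⟩ : ∃ β, w < β ∧ (β : EReal) < A := by
    by_contra hcon
    push_neg at hcon
    have hemp : {α : ℝ | w < α ∧ (α : EReal) < A} = ∅ := by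
      ext α; simp only [mem_setOf_eq, mem_empty_iff_false, iff_false]
      rintro ⟨h1, h2⟩; exact absurd h2 (not_lt.mpr (hcon α h1))
    rw [hemp, image_empty] at hx0
    have h1 : (x0 + 1) ≤ x0 := hx0.2 (by simp [lowerBounds])
    linarith
  have hβD : β ∈ D := ⟨(hw.trans hwβ).le, hβA⟩
  -- membership in the sup-sets
  have hmemS : ∀ t : ℝ, ∀ α ∈ D,
      α * (1 / t) - c α ∈ {y : ℝ | ∃ α : ℝ, 0 ≤ α ∧ (α : EReal) < A ∧ y = α * (1 / t) - c α} :=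
    fun t α hα => ⟨α, hα.1, hα.2, rfl⟩
  have hne : ∀ t : ℝ,
      {y : ℝ | ∃ α : ℝ, 0 ≤ α ∧ (α : EReal) < A ∧ y = α * (1 / t) - c α}.Nonempty := by
    intro t
    refine ⟨0 * (1 / t) - c 0, hmemS t 0 h0D⟩
  -- boundedness above of the sup-sets for t > x0
  have hbdd : ∀ t : ℝ, x0 < t →
      BddAbove {y : ℝ | ∃ α : ℝ, 0 ≤ α ∧ (α : EReal) < A ∧ y = α * (1 / t) - c α} := by
    intro t ht
    have htpos : 0 < t := lt_of_le_of_lt hx0nn ht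
    -- t is not a lower bound of the image, get βt with 1 / c' βt < t
    obtain ⟨z, ⟨βt, ⟨hwβt, hβtA⟩, rfl⟩, hzt⟩ :
        ∃ z ∈ (fun α => 1 / c' α) '' {α : ℝ | w < α ∧ (α : EReal) < A}, z < t := by
      by_contra hcon
      push_neg at hcon
      exact absurd (hx0.2 hcon) (not_le.mpr ht)
    have hcβt : μstar < c' βt := hderiv_gt βt hwβt hβtA
    have hcβtpos : 0 < c' βt := hμpos.trans hcβt
    have h1t : 1 / t < c' βt := by
      rw [div_lt_iff₀ htpos]
      rw [div_lt_iff₀ hcβtpos] at hzt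
      linarith [mul_comm t (c' βt)]
    have hβtD : βt ∈ D := ⟨(hw.trans hwβt).le, hβtA⟩
    refine ⟨c' βt * βt - c βt, ?_⟩
    rintro y ⟨α, hα0, hαA, rfl⟩
    have hαD : α ∈ D := ⟨hα0, hαA⟩
    have htan := tanle βt hβtD (hw.trans hwβt) α hαD
    nlinarith
  -- now the main statement
  intro x hx y hy hxy
  simp only []
  obtain ⟨hx0x, hxμ⟩ := hx
  obtain ⟨hx0y, hyμ⟩ := hy
  have hxpos : 0 < x := lt_of_le_of_lt hx0nn hx0x
  have hypos : 0 < y := lt_of_le_of_lt hx0nn hx0y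
  set Sx := {y : ℝ | ∃ α : ℝ, 0 ≤ α ∧ (α : EReal) < A ∧ y = α * (1 / x) - c α} with hSx
  set Sy := {z : ℝ | ∃ α : ℝ, 0 ≤ α ∧ (α : EReal) < A ∧ z = α * (1 / y) - c α} with hSy
  set ρ := x * sSup Sx with hρ
  -- every α ∈ D gives α - x * c α ≤ ρ
  have hle_ρ : ∀ α ∈ D, α - x * c α ≤ ρ := by
    intro α hαD
    have h1 : α * (1 / x) - c α ≤ sSup Sx := le_csSup (hbdd x hx0x) (hmemS x α hαD)
    have h2 := mul_le_mul_of_nonneg_left h1 hxpos.le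
    calc α - x * c α = x * (α * (1 / x) - c α) := by field_simp
    _ ≤ x * sSup Sx := h2
  -- ρ > w : use positive derivative of α ↦ α/x - c α at w
  have hρw : w < ρ := by
    have hμx : μstar < 1 / x := by
      rw [lt_div_iff₀ hxpos]
      rw [lt_div_iff₀ hμpos] at hxμ
      linarith [mul_comm x μstar]
    set f : ℝ → ℝ := fun α => α * (1 / x) - c α with hf
    have hdf : HasDerivAt f (1 / x - μstar) w := by
      have h1 : HasDerivAt (fun α : ℝ => α * (1 / x)) (1 / x) w :=
        hasDerivAt_mul_const _
      have := h1.sub (hderiv w hw hwA)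
      rwa [hμ] at this
    have hslope : Tendsto (slope f w) (𝓝[≠] w) (𝓝 (1 / x - μstar)) :=
      hasDerivAt_iff_tendsto_slope.mp hdf
    have hpos : (0 : ℝ) < 1 / x - μstar := by linarith
    have hev1 : ∀ᶠ α in 𝓝[>] w, 0 < slope f w α :=
      (hslope.mono_left (nhdsWithin_mono w (fun a ha => ne_of_gt ha))).eventually
        (eventually_gt_nhds hpos)
    have hev2 : ∀ᶠ α in 𝓝[>] w, α < β :=
      eventually_nhdsWithin_of_eventually_nhds (eventually_lt_nhds hwβ)
    have hev3 : ∀ᶠ α in 𝓝[>] w, w < α := eventually_mem_nhdsWithin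
    obtain ⟨α₁, hs1, hα₁β, hwα₁⟩ := (hev1.and (hev2.and hev3)).exists
    have hα₁D : α₁ ∈ D := ⟨(hw.trans hwα₁).le, lt_of_le_of_lt
      (by exact_mod_cast hα₁β.le) hβA⟩
    -- slope positive gives f α₁ > f w
    have hfgt : f w < f α₁ := by
      rw [slope_def_field, div_pos_iff] at hs1
      rcases hs1 with ⟨h1, h2⟩ | ⟨h1, h2⟩
      · linarith
      · linarith
    have hfw : f w = w * (1 / x) := by simp [hf, hcw]
    have : w * (1 / x) < sSup Sx := by
      calc w * (1 / x) = f w := hfw.symm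
      _ < f α₁ := hfgt
      _ ≤ sSup Sx := le_csSup (hbdd x hx0x) (hmemS x α₁ hα₁D)
    have := mul_lt_mul_of_pos_left this hxpos
    rw [show x * (w * (1 / x)) = w by field_simp] at this
    exact this
  -- choose the cutoff point v = w + d
  set d := min ((ρ - w) / 2) ((β - w) / 2) with hd2
  have hdpos : 0 < d := lt_min (by linarith) (by linarith)
  set v := w + d with hv
  have hvρ : v < ρ := by
    have : d ≤ (ρ - w) / 2 := min_le_left _ _
    simp only [hv]; linarith
  have hvβ : v < β := by
    have : d ≤ (β - w) / 2 := min_le_right _ _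
    simp only [hv]; linarith
  have hwv : w < v := by simp only [hv]; linarith
  have hvD : v ∈ D := ⟨(hw.trans hwv).le, lt_of_le_of_lt (by exact_mod_cast hvβ.le) hβA⟩
  have hc0 : 0 < c v := hcpos v hwv hvD.2
  set η := min (ρ - v) ((y - x) * c v) with hη
  have hηpos : 0 < η := lt_min (by linarith) (mul_pos (by linarith) hc0)
  -- key bound : every z ∈ Sy satisfies y * z ≤ ρ - η
  have hkey : ∀ z ∈ Sy, y * z ≤ ρ - η := by
    rintro z ⟨α, hα0, hαA, rfl⟩
    have hαD : α ∈ D := ⟨hα0, hαA⟩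
    have hyz : y * (α * (1 / y) - c α) = α - y * c α := by field_simp
    rw [hyz]
    rcases le_or_gt α w with hαw | hwα
    · -- α ≤ w : value is at most w
      have htan := tanle w hwD hw α hαD
      rw [hμ, hcw] at htan
      have hyμ1 : y * μstar < 1 := by
        rw [lt_div_iff₀ hμpos] at hyμ
        linarith
      have h1 : α - y * c α ≤ w := by nlinarith
      have h2 : ρ - η ≥ v := by
        have : η ≤ ρ - v := min_le_left _ _
        linarith
      linarith
    · rcases lt_or_ge α v with hαv | hvα
      · -- w < α < v
        have hcα : 0 < c α := hcpos α hwα hαD.2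
        have h2 : ρ - η ≥ v := by
          have : η ≤ ρ - v := min_le_left _ _
          linarith
        nlinarith
      · -- v ≤ α : c α ≥ c v, use comparison with ρ
        have htan := tanle v hvD (hw.trans hwv) α hαD
        have hc'v : μstar < c' v := hderiv_gt v hwv hvD.2
        have hcv_le : c v ≤ c α := by nlinarith
        have h1 := hle_ρ α hαD
        have h2 : η ≤ (y - x) * c v := min_le_right _ _
        nlinarith
  -- conclude
  have hsupy : sSup Sy ≤ (ρ - η) / y := by
    apply csSup_le (hne y)
    intro z hz
    rw [le_div_iff₀ hypos]
    have := hkey z hz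
    linarith [mul_comm z y]
  calc y * sSup Sy ≤ y * ((ρ - η) / y) := mul_le_mul_of_nonneg_left hsupy hypos.le
  _ = ρ - η := by rw [mul_comm, div_mul_cancel₀ _ (ne_of_gt hypos)]
  _ < ρ := by linarith
end
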